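/- Let (M, C, T_l, T_r, Π, t, i) be a dual admissible septuple (built from comonads) and let w : T_l X → T_r X be a transposition morphism for an object X of M. Then the operators w_n := i_{T_l^n X} ∘ (t_n^0)_X ∘ Π(T_l^n w) : Z_n → Z_n make the simplicial object Z_n := Π(T_l^{n+1} X) para-cyclic; explicitly, for every n and every 1 ≤ k ≤ n one has: d_0 ∘ w_n = d_n, d_k ∘ w_n = w_{n-1} ∘ d_{k-1}, s_0 ∘ w_n = w_{n+1} ∘ w_{n+1} ∘ s_n, and s_k ∘ w_n = w_{n+1} ∘ s_{k-1}. Moreover, if f : X → X' satisfies T_r(f) ∘ w = w' ∘ T_l(f) for transposition morphisms w, w', then Π(T_l^{n+1} f) commutes with the para-cyclic operators. -/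

import Mathlib

/-!
Put `L_n := t_n^0 ∘ T_l^n w : T_l^{n+1} X ⟶ T_r T_l^n X`, so that `w_n = i ∘ Π(L_n)` and
`L_{n+1} = t ∘ T_l(L_n)`. Each axiom of the dual distributive law says how the lift
`D ↦ t ∘ T_l(D)` of a morphism `D : T_l Y ⟶ T_r Y` interacts with one piece of comonad
structure, so by induction on `n` the maps `L_n` intertwine the faces, the degeneracies and the
comultiplication `Δ_r` exactly as `w` does. The admissibility of `i` then transports these
identities through `Π`; in `s_0 ∘ w_n = w_{n+1} ∘ w_{n+1} ∘ s_n` the two factors `w_{n+1}` are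
the two occurrences of `i` in the admissibility condition for `Δ_l`.
-/

open CategoryTheory

universe v u v' u'

namespace Stmt12

variable {M : Type u} [Category.{v} M]

/-- `fpow T n X` is the `n`-fold application `Tⁿ X`. -/
def fpow (T : M ⥤ M) : ℕ → M → M
  | 0, X => X
  | n + 1, X => T.obj (fpow T n X)

/-- `T^n f : Tⁿ X ⟶ Tⁿ Y`. -/
def fpowMap (T : M ⥤ M) {X Y : M} (f : X ⟶ Y) : (n : ℕ) → (fpow T n X ⟶ fpow T n Y)
  | 0 => f
  | n + 1 => T.map (fpowMap T f n)

/-- The face map `d_k = Tᵏ (ε_{T^{n-k} X}) : Tⁿ⁺¹ X ⟶ Tⁿ X` (meaningful for `k ≤ n`). -/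
def face (T : M ⥤ M) (e : T ⟶ 𝟭 M) (X : M) : (n k : ℕ) → (fpow T (n + 1) X ⟶ fpow T n X)
  | n, 0 => e.app (fpow T n X)
  | n + 1, k + 1 => T.map (face T e X n k)
  | 0, _ + 1 => e.app X

/-- The degeneracy map `s_k = Tᵏ (Δ_{T^{n-k} X}) : Tⁿ⁺¹ X ⟶ Tⁿ⁺² X` (meaningful for
`k ≤ n`). -/
def deg (T : M ⥤ M) (d : T ⟶ T ⋙ T) (X : M) : (n k : ℕ) → (fpow T (n + 1) X ⟶ fpow T (n + 2) X)
  | n, 0 => d.app (fpow T n X)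
  | n + 1, k + 1 => T.map (deg T d X n k)
  | 0, _ + 1 => d.app X

/-- The lifted dual distributive law
`t_n^0 = t T_l^{n-1} ∘ ⋯ ∘ T_l^{n-1} t : T_l^n T_r X ⟶ T_r T_l^n X`. -/
def distIter (Tl Tr : M ⥤ M) (t : Tr ⋙ Tl ⟶ Tl ⋙ Tr) (X : M) :
    (n : ℕ) → (fpow Tl n (Tr.obj X) ⟶ Tr.obj (fpow Tl n X))
  | 0 => 𝟙 (Tr.obj X)
  | n + 1 => Tl.map (distIter Tl Tr t X n) ≫ t.app (fpow Tl n X)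

/-- `T_l^n w : T_l^{n+1} X ⟶ T_l^n Y` for `w : T_l X ⟶ Y`. -/
def transIter (T : M ⥤ M) {X Y : M} (w : T.obj X ⟶ Y) : (n : ℕ) → (fpow T (n + 1) X ⟶ fpow T n Y)
  | 0 => w
  | n + 1 => T.map (transIter T w n)

variable {C : Type u'} [Category.{v'} C]

/-- The para-cyclic operator `w_n := i_{T_l^n X} ∘ (t_n^0)_X ∘ Π(T_l^n w)`. -/
def paraOp (Tl Tr : M ⥤ M) (t : Tr ⋙ Tl ⟶ Tl ⋙ Tr) (P : M ⥤ C) (i : Tr ⋙ P ⟶ Tl ⋙ P)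
    {X : M} (w : Tl.obj X ⟶ Tr.obj X) (n : ℕ) :
    P.obj (fpow Tl (n + 1) X) ⟶ P.obj (fpow Tl (n + 1) X) :=
  P.map (transIter Tl w n ≫ distIter Tl Tr t X n) ≫ i.app (fpow Tl n X)

lemma face_zero (T : M ⥤ M) (e : T ⟶ 𝟭 M) (X : M) (n : ℕ) :
    face T e X n 0 = e.app (fpow T n X) := by
  cases n <;> rfl

lemma deg_zero (T : M ⥤ M) (d : T ⟶ T ⋙ T) (X : M) (n : ℕ) :
    deg T d X n 0 = d.app (fpow T n X) := by
  cases n <;> rfl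

section Lift

variable {Tl Tr : M ⥤ M} (t : Tr ⋙ Tl ⟶ Tl ⋙ Tr)

def distLift {Y : M} (D : Tl.obj Y ⟶ Tr.obj Y) : Tl.obj (Tl.obj Y) ⟶ Tr.obj (Tl.obj Y) :=
  Tl.map D ≫ t.app Y

lemma distLift_comp_map_map {Y Y' : M} {D : Tl.obj Y ⟶ Tr.obj Y} {D' : Tl.obj Y' ⟶ Tr.obj Y'}
    {g : Y ⟶ Y'} {h : Tl.obj Y ⟶ Tl.obj Y'} (hD : D ≫ Tr.map g = h ≫ D') :
    distLift t D ≫ Tr.map (Tl.map g) = Tl.map h ≫ distLift t D' := by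
  have := t.naturality g
  dsimp at this
  simp only [distLift, Category.assoc, ← this, ← Functor.map_comp_assoc, hD]

lemma distLift_comp_counit {er : Tr ⟶ 𝟭 M}
    (ht₃ : ∀ Y : M, t.app Y ≫ er.app (Tl.obj Y) = Tl.map (er.app Y))
    {Y : M} (D : Tl.obj Y ⟶ Tr.obj Y) :
    distLift t D ≫ er.app (Tl.obj Y) = Tl.map (D ≫ er.app Y) := by
  rw [distLift, Category.assoc, ht₃, Functor.map_comp]

lemma distLift_comp_map_counit {el : Tl ⟶ 𝟭 M}
    (ht₄ : ∀ Y : M, t.app Y ≫ Tr.map (el.app Y) = el.app (Tr.obj Y))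
    {Y : M} (D : Tl.obj Y ⟶ Tr.obj Y) :
    distLift t D ≫ Tr.map (el.app Y) = el.app (Tl.obj Y) ≫ D := by
  rw [distLift, Category.assoc, ht₄]
  exact el.naturality D

lemma distLift_comp_map_comul {dl : Tl ⟶ Tl ⋙ Tl}
    (ht₂ : ∀ Y : M, t.app Y ≫ Tr.map (dl.app Y) =
      dl.app (Tr.obj Y) ≫ Tl.map (t.app Y) ≫ t.app (Tl.obj Y))
    {Y : M} (D : Tl.obj Y ⟶ Tr.obj Y) :
    distLift t D ≫ Tr.map (dl.app Y) = dl.app (Tl.obj Y) ≫ distLift t (distLift t D) := by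
  have := dl.naturality D
  dsimp at this
  simp only [distLift, Category.assoc, ht₂, reassoc_of% this, Functor.map_comp]

lemma distLift_comp_comul {dr : Tr ⟶ Tr ⋙ Tr}
    (ht₁ : ∀ Y : M, t.app Y ≫ dr.app (Tl.obj Y) =
      Tl.map (dr.app Y) ≫ t.app (Tr.obj Y) ≫ Tr.map (t.app Y))
    {Y : M} {D : Tl.obj Y ⟶ Tr.obj Y} {s : Tl.obj Y ⟶ Tl.obj (Tl.obj Y)}
    (hD : D ≫ dr.app Y = s ≫ distLift t D ≫ Tr.map D) :
    distLift t D ≫ dr.app (Tl.obj Y) =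
      Tl.map s ≫ distLift t (distLift t D) ≫ Tr.map (distLift t D) := by
  have := t.naturality D
  dsimp at this
  simp only [distLift, Category.assoc, ht₁, ← Functor.map_comp_assoc, hD]
  simp only [Functor.map_comp, Category.assoc, reassoc_of% this]

def liftedTransposition {X : M} (w : Tl.obj X ⟶ Tr.obj X) :
    (n : ℕ) → (fpow Tl (n + 1) X ⟶ Tr.obj (fpow Tl n X))
  | 0 => w
  | n + 1 => distLift t (liftedTransposition w n)

variable {X : M} (w : Tl.obj X ⟶ Tr.obj X)

lemma transIter_comp_distIter (n : ℕ) :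
    transIter Tl w n ≫ distIter Tl Tr t X n = liftedTransposition t w n := by
  induction n with
  | zero => exact Category.comp_id w
  | succ n ih =>
    exact (Tl.map_comp_assoc _ _ _).symm.trans (congrArg (Tl.map · ≫ t.app _) ih)

lemma liftedTransposition_comp_counit {el : Tl ⟶ 𝟭 M} {er : Tr ⟶ 𝟭 M}
    (ht₃ : ∀ Y : M, t.app Y ≫ er.app (Tl.obj Y) = Tl.map (er.app Y))
    (hw₁ : w ≫ er.app X = el.app X) (n : ℕ) :
    liftedTransposition t w n ≫ er.app (fpow Tl n X) = face Tl el X n n := by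
  induction n with
  | zero => exact hw₁
  | succ n ih =>
    exact (distLift_comp_counit t ht₃ _).trans (congrArg Tl.map ih)

lemma liftedTransposition_comp_map_face {el : Tl ⟶ 𝟭 M}
    (ht₄ : ∀ Y : M, t.app Y ≫ Tr.map (el.app Y) = el.app (Tr.obj Y)) :
    ∀ n k : ℕ, k ≤ n → liftedTransposition t w (n + 1) ≫ Tr.map (face Tl el X n k) =
      face Tl el X (n + 1) k ≫ liftedTransposition t w n
  | n, 0, _ => by
    rw [face_zero, face_zero]
    exact distLift_comp_map_counit t ht₄ _
  | n + 1, k + 1, hk =>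
    distLift_comp_map_map t (liftedTransposition_comp_map_face ht₄ n k (by omega))

lemma liftedTransposition_comp_map_deg {dl : Tl ⟶ Tl ⋙ Tl}
    (ht₂ : ∀ Y : M, t.app Y ≫ Tr.map (dl.app Y) =
      dl.app (Tr.obj Y) ≫ Tl.map (t.app Y) ≫ t.app (Tl.obj Y)) :
    ∀ n k : ℕ, k ≤ n → liftedTransposition t w (n + 1) ≫ Tr.map (deg Tl dl X n k) =
      deg Tl dl X (n + 1) k ≫ liftedTransposition t w (n + 2)
  | n, 0, _ => by
    rw [deg_zero, deg_zero]
    exact distLift_comp_map_comul t ht₂ _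
  | n + 1, k + 1, hk =>
    distLift_comp_map_map t (liftedTransposition_comp_map_deg ht₂ n k (by omega))

lemma liftedTransposition_comp_comul {dl : Tl ⟶ Tl ⋙ Tl} {dr : Tr ⟶ Tr ⋙ Tr}
    (ht₁ : ∀ Y : M, t.app Y ≫ dr.app (Tl.obj Y) =
      Tl.map (dr.app Y) ≫ t.app (Tr.obj Y) ≫ Tr.map (t.app Y))
    (hw₂ : w ≫ dr.app X = dl.app X ≫ Tl.map w ≫ t.app X ≫ Tr.map w) (n : ℕ) :
    liftedTransposition t w n ≫ dr.app (fpow Tl n X) =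
      deg Tl dl X n n ≫ liftedTransposition t w (n + 1) ≫
        Tr.map (liftedTransposition t w n) := by
  induction n with
  | zero => exact hw₂.trans (congrArg (dl.app X ≫ ·) (Category.assoc _ _ _).symm)
  | succ n ih => exact distLift_comp_comul t ht₁ ih

lemma liftedTransposition_naturality {X' : M} (w' : Tl.obj X' ⟶ Tr.obj X') {f : X ⟶ X'}
    (hf : w ≫ Tr.map f = Tl.map f ≫ w') (n : ℕ) :
    liftedTransposition t w n ≫ Tr.map (fpowMap Tl f n) =
      fpowMap Tl f (n + 1) ≫ liftedTransposition t w' n := by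
  induction n with
  | zero => exact hf
  | succ n ih => exact distLift_comp_map_map t ih

end Lift

section Project

variable {Tl Tr : M ⥤ M} {P : M ⥤ C} (i : Tr ⋙ P ⟶ Tl ⋙ P)

lemma map_comp_app_comp_map_counit {el : Tl ⟶ 𝟭 M} {er : Tr ⟶ 𝟭 M}
    (hi₁ : ∀ Y : M, i.app Y ≫ P.map (el.app Y) = P.map (er.app Y))
    {Y : M} (D : Tl.obj Y ⟶ Tr.obj Y) :
    (P.map D ≫ i.app Y) ≫ P.map (el.app Y) = P.map (D ≫ er.app Y) := by
  rw [Category.assoc, hi₁, Functor.map_comp]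

lemma map_comp_app_comp_map_map {Y Y' : M} {D : Tl.obj Y ⟶ Tr.obj Y}
    {D' : Tl.obj Y' ⟶ Tr.obj Y'} {g : Y ⟶ Y'} {h : Tl.obj Y ⟶ Tl.obj Y'}
    (hD : D ≫ Tr.map g = h ≫ D') :
    (P.map D ≫ i.app Y) ≫ P.map (Tl.map g) = P.map h ≫ P.map D' ≫ i.app Y' := by
  have := i.naturality g
  dsimp at this
  rw [Category.assoc, ← this, ← Functor.map_comp_assoc, hD, Functor.map_comp_assoc]

lemma map_comp_app_comp_map_comul {dl : Tl ⟶ Tl ⋙ Tl} {dr : Tr ⟶ Tr ⋙ Tr}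
    {t : Tr ⋙ Tl ⟶ Tl ⋙ Tr}
    (hi₂ : ∀ Y : M, i.app Y ≫ P.map (dl.app Y) =
      P.map (dr.app Y) ≫ i.app (Tr.obj Y) ≫ P.map (t.app Y) ≫ i.app (Tl.obj Y))
    {Y : M} {D : Tl.obj Y ⟶ Tr.obj Y} {s : Tl.obj Y ⟶ Tl.obj (Tl.obj Y)}
    (hD : D ≫ dr.app Y = s ≫ distLift t D ≫ Tr.map D) :
    (P.map D ≫ i.app Y) ≫ P.map (dl.app Y) =
      P.map s ≫ (P.map (distLift t D) ≫ i.app (Tl.obj Y)) ≫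
        P.map (distLift t D) ≫ i.app (Tl.obj Y) := by
  have := i.naturality D
  dsimp at this
  rw [Category.assoc, hi₂, ← Functor.map_comp_assoc, hD]
  simp only [distLift, Functor.map_comp, Category.assoc, reassoc_of% this]

end Project

lemma paraOp_eq (Tl Tr : M ⥤ M) (t : Tr ⋙ Tl ⟶ Tl ⋙ Tr) (P : M ⥤ C) (i : Tr ⋙ P ⟶ Tl ⋙ P)
    {X : M} (w : Tl.obj X ⟶ Tr.obj X) (n : ℕ) :
    paraOp Tl Tr t P i w n = P.map (liftedTransposition t w n) ≫ i.app (fpow Tl n X) := by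
  rw [paraOp, transIter_comp_distIter]
  rfl

theorem paracyclic_of_transposition_general
    (Tl Tr : M ⥤ M) (dl : Tl ⟶ Tl ⋙ Tl) (el : Tl ⟶ 𝟭 M)
    (dr : Tr ⟶ Tr ⋙ Tr) (er : Tr ⟶ 𝟭 M)
    (P : M ⥤ C) (t : Tr ⋙ Tl ⟶ Tl ⋙ Tr) (i : Tr ⋙ P ⟶ Tl ⋙ P)
    -- `t` is a dual distributive law
    (ht₁ : ∀ X : M, t.app X ≫ dr.app (Tl.obj X) =
      Tl.map (dr.app X) ≫ t.app (Tr.obj X) ≫ Tr.map (t.app X))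
    (ht₂ : ∀ X : M, t.app X ≫ Tr.map (dl.app X) =
      dl.app (Tr.obj X) ≫ Tl.map (t.app X) ≫ t.app (Tl.obj X))
    (ht₃ : ∀ X : M, t.app X ≫ er.app (Tl.obj X) = Tl.map (er.app X))
    (ht₄ : ∀ X : M, t.app X ≫ Tr.map (el.app X) = el.app (Tr.obj X))
    -- admissibility conditions on `i`
    (hi₁ : ∀ X : M, i.app X ≫ P.map (el.app X) = P.map (er.app X))
    (hi₂ : ∀ X : M, i.app X ≫ P.map (dl.app X) =
      P.map (dr.app X) ≫ i.app (Tr.obj X) ≫ P.map (t.app X) ≫ i.app (Tl.obj X))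
    -- `w` is a transposition morphism
    (X : M) (w : Tl.obj X ⟶ Tr.obj X)
    (hw₁ : w ≫ er.app X = el.app X)
    (hw₂ : w ≫ dr.app X = dl.app X ≫ Tl.map w ≫ t.app X ≫ Tr.map w) :
    -- `d_0 ∘ w_n = d_n`
    (∀ n : ℕ, paraOp Tl Tr t P i w n ≫ P.map (face Tl el X n 0) =
      P.map (face Tl el X n n)) ∧
    -- `d_k ∘ w_n = w_{n-1} ∘ d_{k-1}` for `1 ≤ k ≤ n`
    (∀ n k : ℕ, k ≤ n →
      paraOp Tl Tr t P i w (n + 1) ≫ P.map (face Tl el X (n + 1) (k + 1)) =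
        P.map (face Tl el X (n + 1) k) ≫ paraOp Tl Tr t P i w n) ∧
    -- `s_0 ∘ w_n = w_{n+1} ∘ w_{n+1} ∘ s_n`
    (∀ n : ℕ, paraOp Tl Tr t P i w n ≫ P.map (deg Tl dl X n 0) =
      P.map (deg Tl dl X n n) ≫ paraOp Tl Tr t P i w (n + 1) ≫
        paraOp Tl Tr t P i w (n + 1)) ∧
    -- `s_k ∘ w_n = w_{n+1} ∘ s_{k-1}` for `1 ≤ k ≤ n`
    (∀ n k : ℕ, k ≤ n →
      paraOp Tl Tr t P i w (n + 1) ≫ P.map (deg Tl dl X (n + 1) (k + 1)) =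
        P.map (deg Tl dl X (n + 1) k) ≫ paraOp Tl Tr t P i w (n + 2)) ∧
    -- a morphism of transposition morphisms induces a morphism of para-cyclic objects
    (∀ (X' : M) (w' : Tl.obj X' ⟶ Tr.obj X'),
      w' ≫ er.app X' = el.app X' →
      w' ≫ dr.app X' = dl.app X' ≫ Tl.map w' ≫ t.app X' ≫ Tr.map w' →
      ∀ f : X ⟶ X', w ≫ Tr.map f = Tl.map f ≫ w' →
      ∀ n : ℕ, P.map (fpowMap Tl f (n + 1)) ≫ paraOp Tl Tr t P i w' n =
        paraOp Tl Tr t P i w n ≫ P.map (fpowMap Tl f (n + 1))) := by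
  simp only [paraOp_eq]
  refine ⟨fun n => ?_, fun n k hk => ?_, fun n => ?_, fun n k hk => ?_,
    fun X' w' _ _ f hf n => ?_⟩
  · rw [face_zero]
    exact (map_comp_app_comp_map_counit i hi₁ _).trans
      (congrArg P.map (liftedTransposition_comp_counit t w ht₃ hw₁ n))
  · exact map_comp_app_comp_map_map i (liftedTransposition_comp_map_face t w ht₄ n k hk)
  · rw [deg_zero]
    exact map_comp_app_comp_map_comul i hi₂ (liftedTransposition_comp_comul t w ht₁ hw₂ n)
  · exact map_comp_app_comp_map_map i (liftedTransposition_comp_map_deg t w ht₂ n k hk)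
  · exact (map_comp_app_comp_map_map i
      (liftedTransposition_naturality t w w' hf n)).symm

theorem paracyclic_of_transposition
    (Tl Tr : M ⥤ M) (dl : Tl ⟶ Tl ⋙ Tl) (el : Tl ⟶ 𝟭 M)
    (dr : Tr ⟶ Tr ⋙ Tr) (er : Tr ⟶ 𝟭 M)
    (P : M ⥤ C) (t : Tr ⋙ Tl ⟶ Tl ⋙ Tr) (i : Tr ⋙ P ⟶ Tl ⋙ P)
    -- `(T_l, dl, el)` is a comonad
    (hdl : ∀ X : M, dl.app X ≫ Tl.map (dl.app X) = dl.app X ≫ dl.app (Tl.obj X))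
    (hel₁ : ∀ X : M, dl.app X ≫ el.app (Tl.obj X) = 𝟙 (Tl.obj X))
    (hel₂ : ∀ X : M, dl.app X ≫ Tl.map (el.app X) = 𝟙 (Tl.obj X))
    -- `(T_r, dr, er)` is a comonad
    (hdr : ∀ X : M, dr.app X ≫ Tr.map (dr.app X) = dr.app X ≫ dr.app (Tr.obj X))
    (her₁ : ∀ X : M, dr.app X ≫ er.app (Tr.obj X) = 𝟙 (Tr.obj X))
    (her₂ : ∀ X : M, dr.app X ≫ Tr.map (er.app X) = 𝟙 (Tr.obj X))
    -- `t` is a dual distributive law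
    (ht₁ : ∀ X : M, t.app X ≫ dr.app (Tl.obj X) =
      Tl.map (dr.app X) ≫ t.app (Tr.obj X) ≫ Tr.map (t.app X))
    (ht₂ : ∀ X : M, t.app X ≫ Tr.map (dl.app X) =
      dl.app (Tr.obj X) ≫ Tl.map (t.app X) ≫ t.app (Tl.obj X))
    (ht₃ : ∀ X : M, t.app X ≫ er.app (Tl.obj X) = Tl.map (er.app X))
    (ht₄ : ∀ X : M, t.app X ≫ Tr.map (el.app X) = el.app (Tr.obj X))
    -- admissibility conditions on `i`
    (hi₁ : ∀ X : M, i.app X ≫ P.map (el.app X) = P.map (er.app X))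
    (hi₂ : ∀ X : M, i.app X ≫ P.map (dl.app X) =
      P.map (dr.app X) ≫ i.app (Tr.obj X) ≫ P.map (t.app X) ≫ i.app (Tl.obj X))
    -- `w` is a transposition morphism
    (X : M) (w : Tl.obj X ⟶ Tr.obj X)
    (hw₁ : w ≫ er.app X = el.app X)
    (hw₂ : w ≫ dr.app X = dl.app X ≫ Tl.map w ≫ t.app X ≫ Tr.map w) :
    -- `d_0 ∘ w_n = d_n`
    (∀ n : ℕ, paraOp Tl Tr t P i w n ≫ P.map (face Tl el X n 0) =
      P.map (face Tl el X n n)) ∧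
    -- `d_k ∘ w_n = w_{n-1} ∘ d_{k-1}` for `1 ≤ k ≤ n`
    (∀ n k : ℕ, k ≤ n →
      paraOp Tl Tr t P i w (n + 1) ≫ P.map (face Tl el X (n + 1) (k + 1)) =
        P.map (face Tl el X (n + 1) k) ≫ paraOp Tl Tr t P i w n) ∧
    -- `s_0 ∘ w_n = w_{n+1} ∘ w_{n+1} ∘ s_n`
    (∀ n : ℕ, paraOp Tl Tr t P i w n ≫ P.map (deg Tl dl X n 0) =
      P.map (deg Tl dl X n n) ≫ paraOp Tl Tr t P i w (n + 1) ≫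
        paraOp Tl Tr t P i w (n + 1)) ∧
    -- `s_k ∘ w_n = w_{n+1} ∘ s_{k-1}` for `1 ≤ k ≤ n`
    (∀ n k : ℕ, k ≤ n →
      paraOp Tl Tr t P i w (n + 1) ≫ P.map (deg Tl dl X (n + 1) (k + 1)) =
        P.map (deg Tl dl X (n + 1) k) ≫ paraOp Tl Tr t P i w (n + 2)) ∧
    -- a morphism of transposition morphisms induces a morphism of para-cyclic objects
    (∀ (X' : M) (w' : Tl.obj X' ⟶ Tr.obj X'),
      w' ≫ er.app X' = el.app X' →
      w' ≫ dr.app X' = dl.app X' ≫ Tl.map w' ≫ t.app X' ≫ Tr.map w' →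
      ∀ f : X ⟶ X', w ≫ Tr.map f = Tl.map f ≫ w' →
      ∀ n : ℕ, P.map (fpowMap Tl f (n + 1)) ≫ paraOp Tl Tr t P i w' n =
        paraOp Tl Tr t P i w n ≫ P.map (fpowMap Tl f (n + 1))) :=
  paracyclic_of_transposition_general Tl Tr dl el dr er P t i ht₁ ht₂ ht₃ ht₄ hi₁ hi₂ X w hw₁ hw₂

end Stmt12
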